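/- arXiv:2504.14261 — 2 statements merged into one kernel-verified Lean document; each statement's English description precedes it below -/
import Mathlib

section
/- For all k ≥ 2, all roots of Ψ_k(x) = x^k - 2x^{k-1} - x^{k-2} - ... - x - 1 other than its unique real root α > 1 have absolute value strictly less than 1. -/
/-!
Multiplying by `x - 1` gives `(x - 1) Ψ_k(x) = x^(k+1) - 3 x^k + x^(k-1) + 1`. For a root `z` with
`r = |z| ≥ 1`, the triangle inequality applied to `z^k = 2 z^(k-1) + ∑ z^i` gives `Ψ_k(r) ≤ 0`, hence
`r^(k+1) + r^(k-1) + 1 ≤ 3 r^k`, while applied to `3 z^k = z^(k+1) + (z^(k-1) + 1)` it gives the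
reverse. Equality puts `z^(k+1) = z · z^k` on the ray of `z^k`, so `z = r` is a positive real
root, and `Ψ_k` has only one of those.
-/

open Finset

/-- `psi n x` is `Ψ_{n+1}(x)`; the index shift avoids the truncated `k - 1`. -/
def psi {R : Type*} [CommRing R] (n : ℕ) (x : R) : R :=
  x ^ (n + 1) - 2 * x ^ n - ∑ i ∈ range n, x ^ i

theorem sub_one_mul_psi {R : Type*} [CommRing R] (n : ℕ) (x : R) :
    (x - 1) * psi n x = x ^ (n + 2) - 3 * x ^ (n + 1) + x ^ n + 1 := by
  unfold psi
  linear_combination (-1 : R) * geom_sum_mul x n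

@[simp, norm_cast]
theorem Complex.ofReal_psi (n : ℕ) (x : ℝ) : ((psi n x : ℝ) : ℂ) = psi n (x : ℂ) := by
  simp [psi]

theorem psi_norm_nonpos {𝕜 : Type*} [NormedField 𝕜] {n : ℕ} {z : 𝕜} (hz : psi n z = 0) :
    psi n ‖z‖ ≤ 0 := by
  have hz' : z ^ (n + 1) = z ^ n + z ^ n + ∑ i ∈ range n, z ^ i := by
    unfold psi at hz
    linear_combination hz
  have hbound : ‖z‖ ^ (n + 1) ≤ ‖z‖ ^ n + ‖z‖ ^ n + ∑ i ∈ range n, ‖z‖ ^ i := by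
    calc ‖z‖ ^ (n + 1) = ‖z ^ n + z ^ n + ∑ i ∈ range n, z ^ i‖ := by rw [← hz', norm_pow]
      _ ≤ ‖z ^ n‖ + ‖z ^ n‖ + ∑ i ∈ range n, ‖z ^ i‖ :=
        (norm_add_le _ _).trans (add_le_add (norm_add_le _ _) (norm_sum_le _ _))
      _ = _ := by simp only [norm_pow]
  unfold psi
  linarith

section Ordered

variable {K : Type*} [CommSemiring K] [PartialOrder K] [IsStrictOrderedRing K] {s t : K}

theorem pow_mul_pow_le_pow_mul_pow (hs : 0 ≤ s) (hst : s ≤ t) {i m : ℕ} (him : i ≤ m) :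
    t ^ i * s ^ m ≤ s ^ i * t ^ m := by
  obtain ⟨j, rfl⟩ := Nat.exists_eq_add_of_le him
  calc t ^ i * s ^ (i + j) = (s * t) ^ i * s ^ j := by ring
    _ ≤ (s * t) ^ i * t ^ j := by
      gcongr
      exact pow_nonneg (mul_nonneg hs (hs.trans hst)) i
    _ = s ^ i * t ^ (i + j) := by ring

theorem pow_mul_pow_lt_pow_mul_pow (hs : 0 < s) (hst : s < t) {i m : ℕ} (him : i < m) :
    t ^ i * s ^ m < s ^ i * t ^ m := by
  obtain ⟨j, rfl⟩ := Nat.exists_eq_add_of_lt him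
  have ht : 0 < t := hs.trans hst
  calc t ^ i * s ^ (i + j + 1) = (s * t) ^ i * s ^ (j + 1) := by ring
    _ < (s * t) ^ i * t ^ (j + 1) := by gcongr
    _ = s ^ i * t ^ (i + j + 1) := by ring

end Ordered

/-- Past a point where it is nonnegative, `psi n` is positive: dividing by `t ^ (n + 1)` turns
`psi n t` into `1 - 2 / t - ∑ t ^ (i - n - 1)`, which is increasing. -/
theorem psi_pos_of_lt {n : ℕ} {s t : ℝ} (hs : 0 < s) (hst : s < t) (h : 0 ≤ psi n s) :
    0 < psi n t := by
  have hcross : (2 * t ^ n + ∑ i ∈ range n, t ^ i) * s ^ (n + 1)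
      < (2 * s ^ n + ∑ i ∈ range n, s ^ i) * t ^ (n + 1) := by
    simp only [add_mul, mul_assoc, sum_mul]
    refine add_lt_add_of_lt_of_le ?_ (sum_le_sum fun i hi => ?_)
    · exact mul_lt_mul_of_pos_left (pow_mul_pow_lt_pow_mul_pow hs hst n.lt_succ_self) two_pos
    · exact pow_mul_pow_le_pow_mul_pow hs.le hst.le (by simp at hi; omega)
  have hle : 2 * s ^ n + ∑ i ∈ range n, s ^ i ≤ s ^ (n + 1) := by unfold psi at h; linarith
  have hlt : (2 * t ^ n + ∑ i ∈ range n, t ^ i) * s ^ (n + 1) < t ^ (n + 1) * s ^ (n + 1) := by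
    nlinarith [pow_pos (hs.trans hst) (n + 1)]
  have := lt_of_mul_lt_mul_right hlt (pow_pos hs _).le
  unfold psi
  linarith

theorem eq_of_psi_eq_zero {n : ℕ} {s t : ℝ} (hs : 0 < s) (ht : 0 < t)
    (hs0 : psi n s = 0) (ht0 : psi n t = 0) : s = t := by
  rcases lt_trichotomy s t with hst | rfl | hts
  · exact absurd ht0 (psi_pos_of_lt hs hst hs0.ge).ne'
  · rfl
  · exact absurd hs0 (psi_pos_of_lt ht hts ht0.ge).ne'

theorem exists_one_lt_psi_eq_zero (n : ℕ) : ∃ α : ℝ, 1 < α ∧ psi n α = 0 := by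
  have h1 : psi n (1 : ℝ) < 0 := by
    simp only [psi, one_pow, sum_const, card_range, nsmul_eq_mul, mul_one]
    linarith [n.cast_nonneg (α := ℝ)]
  have h3 : 0 < psi n (3 : ℝ) := by
    have := geom_sum_mul (3 : ℝ) n
    unfold psi
    nlinarith [pow_pos (three_pos (α := ℝ)) n, pow_succ (3 : ℝ) n]
  have hcont : ContinuousOn (psi n) (Set.Icc (1 : ℝ) 3) := by unfold psi; fun_prop
  obtain ⟨α, hα, hα0⟩ := intermediate_value_Ioo (by norm_num) hcont ⟨h1, h3⟩
  exact ⟨α, hα.1, hα0⟩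

theorem Complex.eq_norm_of_psi_eq_zero {n : ℕ} {z : ℂ} (hz : psi n z = 0) (hz1 : 1 ≤ ‖z‖) :
    z = ‖z‖ := by
  have hG : z ^ (n + 2) + (z ^ n + 1) = 3 * z ^ (n + 1) := by
    linear_combination (z - 1) * hz - sub_one_mul_psi n z
  have hr : ‖z‖ ^ (n + 2) + ‖z‖ ^ n + 1 ≤ 3 * ‖z‖ ^ (n + 1) := by
    nlinarith [sub_one_mul_psi n ‖z‖, psi_norm_nonpos hz]
  have hnorm : ‖z ^ (n + 2) + (z ^ n + 1)‖ = ‖z ^ (n + 2)‖ + ‖z ^ n + 1‖ := by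
    refine le_antisymm (norm_add_le _ _) ?_
    calc ‖z ^ (n + 2)‖ + ‖z ^ n + 1‖ ≤ ‖z‖ ^ (n + 2) + (‖z‖ ^ n + 1) := by
          rw [norm_pow]; grw [norm_add_le, norm_pow, norm_one]
      _ ≤ 3 * ‖z‖ ^ (n + 1) := by linarith
      _ = ‖z ^ (n + 2) + (z ^ n + 1)‖ := by rw [hG, norm_mul, norm_pow]; norm_num
  have hray : SameRay ℝ (z ^ (n + 2)) ((3 : ℝ) • z ^ (n + 1)) := by
    have := SameRay.rfl.add_right (sameRay_iff_norm_add.mpr hnorm)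
    rwa [hG, ← ofReal_ofNat, ← real_smul] at this
  have hw : z ^ (n + 1) ≠ 0 := pow_ne_zero _ (norm_pos_iff.mp (one_pos.trans_le hz1))
  obtain ⟨c, hc, hzc⟩ := hray.exists_nonneg_right (smul_ne_zero three_ne_zero hw)
  have hz3c : z = ((3 * c : ℝ) : ℂ) := by
    refine mul_right_cancel₀ hw ?_
    calc z * z ^ (n + 1) = z ^ (n + 2) := by ring
      _ = _ := by rw [hzc, smul_smul, real_smul, mul_comm c]
  rw [hz3c, norm_real, Real.norm_of_nonneg (by positivity)]

theorem psi_k_other_roots_in_unit_disc (k : ℕ) (hk : 2 ≤ k) :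
    ∃ α : ℝ, 1 < α ∧
      α ^ k - 2 * α ^ (k - 1) - ∑ i ∈ Finset.range (k - 1), α ^ i = 0 ∧
      ∀ z : ℂ, z ^ k - 2 * z ^ (k - 1) - ∑ i ∈ Finset.range (k - 1), z ^ i = 0 →
        z ≠ (α : ℂ) → ‖z‖ < 1 := by
  obtain ⟨n, rfl⟩ : ∃ n, k = n + 1 := ⟨k - 1, by omega⟩
  simp only [Nat.add_sub_cancel]
  obtain ⟨α, hα1, hα⟩ := exists_one_lt_psi_eq_zero n
  refine ⟨α, hα1, hα, fun z hz hzα => ?_⟩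
  by_contra! hz1
  have hzr : z = ‖z‖ := Complex.eq_norm_of_psi_eq_zero hz hz1
  have hr : psi n ‖z‖ = 0 := by
    rw [hzr] at hz
    exact_mod_cast hz
  exact hzα <| hzr.trans (congrArg _ (eq_of_psi_eq_zero (by linarith) (by linarith) hr hα))
end

section
/- Let k ≥ 2 and let α be the dominant root of x^k - 2x^{k-1} - ... - x - 1. If d₁ ∈ {1,...,9}, ℓ, m ≥ 1, and f_k is as above with 0.276 < f_k(α) < 1, then the equation d₁·10^{2ℓ+m} = 9·f_k(α)·α^n has no solution in integers n ≥ 7; equivalently, the quantity (9f_k(α)/d₁)·10^{-2ℓ-m}·α^n - 1 is nonzero. -/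
/-!
Since `Ψ_k` is monic with constant term `-1`, `α` is an algebraic unit: the product of the
absolute values of its complex conjugates is `1`, so, as `α > 1`, some conjugate `β` has
`|β| < 1`. Clearing denominators turns the equation into an integer polynomial relation
`9 (α - 1) α ^ n = D g_k(α)`, where `D = d₁ 10 ^ (2ℓ + m) ≥ 100` and `g_k` is the
denominator of `f_k`, so it also holds at `β`. There the left side has modulus at most `18`,
whereas `|g_k(β)| ≥ 1`: for `k = 2`, `g_2 ≡ 4` modulo `Ψ_2`; for `k ≥ 3`, `Ψ_k(β) = 0` gives
`β ^ (k - 1) (β² - 3β + 1) = -1`, hence `|β² - 3β + 1| ≥ 1` and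
`|g_k(β)| = |k (β² - 3β + 1) - (1 - β²)| ≥ 3 - 2`.
-/

open Polynomial Finset

lemma Multiset.exists_norm_lt_one_of_norm_prod_le_one {𝕜 : Type*} [NormedField 𝕜]
    {s : Multiset 𝕜} {a : 𝕜} (ha : a ∈ s) (ha1 : 1 < ‖a‖) (hs : ‖s.prod‖ ≤ 1) :
    ∃ b ∈ s, ‖b‖ < 1 := by
  classical
  by_contra! hge
  have hrest : 1 ≤ ‖(s.erase a).prod‖ :=
    Multiset.prod_induction (fun x => 1 ≤ ‖x‖) _
      (fun x y hx hy => by rw [norm_mul]; exact one_le_mul_of_one_le_of_one_le hx hy)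
      (by simp) (fun x hx => hge x (Multiset.mem_of_mem_erase hx))
  rw [← Multiset.cons_erase ha, Multiset.prod_cons, norm_mul] at hs
  nlinarith

lemma minpoly.isUnit_coeff_zero_of_aeval_eq_zero {R S : Type*} [CommRing R] [IsDomain R]
    [IsIntegrallyClosed R] [CommRing S] [IsDomain S] [Algebra R S] [Module.IsTorsionFree R S]
    {s : S} (hs : IsIntegral R s) {p : R[X]} (hps : Polynomial.aeval s p = 0)
    (hp0 : IsUnit (p.coeff 0)) :
    IsUnit ((minpoly R s).coeff 0) := by
  obtain ⟨c, hc⟩ := minpoly.isIntegrallyClosed_dvd hs hps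
  rw [hc, mul_coeff_zero] at hp0
  exact isUnit_of_mul_isUnit_left hp0

lemma norm_prod_aroots_minpoly {α : ℂ} (hα : IsIntegral ℤ α)
    (hunit : IsUnit ((minpoly ℤ α).coeff 0)) : ‖((minpoly ℤ α).aroots ℂ).prod‖ = 1 := by
  have h := Splits.coeff_zero_eq_prod_roots_of_monic
    (IsAlgClosed.splits ((minpoly ℤ α).map (algebraMap ℤ ℂ))) ((minpoly.monic hα).map _)
  rw [coeff_map] at h
  have hcoeff : |((minpoly ℤ α).coeff 0 : ℝ)| = 1 := by
    rw [← Int.cast_abs, Int.isUnit_iff_abs_eq.mp hunit, Int.cast_one]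
  simpa [aroots, Complex.norm_intCast, hcoeff] using (congrArg norm h).symm

theorem exists_norm_lt_one_forall_aeval_eq_zero {α : ℂ} (hα : 1 < ‖α‖) {P : ℤ[X]}
    (hP : P.Monic) (hPα : aeval α P = 0) (hP0 : IsUnit (P.coeff 0)) :
    ∃ β : ℂ, ‖β‖ < 1 ∧ ∀ Q : ℤ[X], aeval α Q = 0 → aeval β Q = 0 := by
  have hint : IsIntegral ℤ α := ⟨P, hP, hPα⟩
  have hαmem : α ∈ (minpoly ℤ α).aroots ℂ :=
    mem_aroots.mpr ⟨minpoly.ne_zero hint, minpoly.aeval ℤ α⟩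
  obtain ⟨β, hβmem, hβ⟩ := Multiset.exists_norm_lt_one_of_norm_prod_le_one hαmem hα
    (norm_prod_aroots_minpoly hint
      (minpoly.isUnit_coeff_zero_of_aeval_eq_zero hint hPα hP0)).le
  refine ⟨β, hβ, fun Q hQ => ?_⟩
  obtain ⟨c, rfl⟩ := minpoly.isIntegrallyClosed_dvd hint hQ
  rw [map_mul, (mem_aroots.mp hβmem).2, zero_mul]

noncomputable def pellCharPoly (k : ℕ) : ℤ[X] :=
  X ^ k - 2 * X ^ (k - 1) - ∑ i ∈ range (k - 1), X ^ i

/-- `f_k(x) = (x - 1) / pellDenom k (x)`. -/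
noncomputable def pellDenom (k : ℕ) : ℤ[X] :=
  (k + 1 : ℤ[X]) * X ^ 2 - 3 * (k : ℤ[X]) * X + (k : ℤ[X]) - 1

section
variable {A : Type*} [CommRing A]

@[simp]
lemma aeval_pellCharPoly (k : ℕ) (x : A) :
    aeval x (pellCharPoly k) = x ^ k - 2 * x ^ (k - 1) - ∑ i ∈ range (k - 1), x ^ i := by
  simp [pellCharPoly, map_ofNat]

@[simp]
lemma aeval_pellDenom (k : ℕ) (x : A) :
    aeval x (pellDenom k) = (k + 1) * x ^ 2 - 3 * k * x + k - 1 := by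
  simp [pellDenom, map_ofNat]

lemma sub_one_mul_aeval_pellCharPoly {k : ℕ} (hk : 1 ≤ k) (x : A) :
    (x - 1) * aeval x (pellCharPoly k) = x ^ (k - 1) * (x ^ 2 - 3 * x + 1) + 1 := by
  obtain ⟨j, rfl⟩ := Nat.exists_eq_add_of_le' hk
  simp only [aeval_pellCharPoly, Nat.add_sub_cancel]
  linear_combination (-1 : A) * geom_sum_mul x j
end

lemma pellCharPoly_monic {k : ℕ} (hk : 1 ≤ k) : (pellCharPoly k).Monic := by
  obtain ⟨j, rfl⟩ := Nat.exists_eq_add_of_le' hk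
  rw [pellCharPoly, sub_sub]
  refine (monic_X_pow _).sub_of_left ((degree_add_le _ _).trans_lt (max_lt ?_ ?_))
  · compute_degree!
    exact WithBot.coe_lt_coe.2 j.lt_succ_self
  · rw [degree_X_pow]
    refine (degree_sum_le _ _).trans_lt
      ((Finset.sup_lt_iff (WithBot.bot_lt_coe _)).2 fun i hi => ?_)
    rw [degree_X_pow]
    exact_mod_cast (Finset.mem_range.1 hi).trans_le (by omega)

lemma pellCharPoly_coeff_zero {k : ℕ} (hk : 2 ≤ k) : (pellCharPoly k).coeff 0 = -1 := by
  obtain ⟨j, rfl⟩ := Nat.exists_eq_add_of_le' hk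
  simp [pellCharPoly, coeff_X_pow, finsetSum_coeff]

lemma one_le_norm_aeval_pellDenom {k : ℕ} (hk : 2 ≤ k) {β : ℂ} (hβ : ‖β‖ ≤ 1)
    (hΨ : aeval β (pellCharPoly k) = 0) : 1 ≤ ‖aeval β (pellDenom k)‖ := by
  rcases hk.eq_or_lt with rfl | hk3
  · have h4 : aeval β (pellDenom 2) = 4 := by
      simp only [aeval_pellCharPoly, aeval_pellDenom] at hΨ ⊢
      norm_num at hΨ ⊢
      linear_combination 3 * hΨ
    norm_num [h4]
  have hg : β ^ (k - 1) * (β ^ 2 - 3 * β + 1) = -1 := by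
    linear_combination -(sub_one_mul_aeval_pellCharPoly (k := k) (by omega) β) + (β - 1) * hΨ
  have hg1 : 1 ≤ ‖β ^ 2 - 3 * β + 1‖ :=
    calc 1 = ‖β‖ ^ (k - 1) * ‖β ^ 2 - 3 * β + 1‖ := by
          rw [← norm_pow, ← norm_mul, hg, norm_neg, norm_one]
      _ ≤ ‖β ^ 2 - 3 * β + 1‖ :=
          mul_le_of_le_one_left (norm_nonneg _) (pow_le_one₀ (norm_nonneg _) hβ)
  have hsq : ‖1 - β ^ 2‖ ≤ 2 := by
    refine (norm_sub_le _ _).trans ?_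
    rw [norm_one, norm_pow]
    nlinarith [norm_nonneg β]
  have hk3' : (3 : ℝ) ≤ k := by exact_mod_cast hk3
  calc (1 : ℝ) ≤ ‖(k : ℂ) * (β ^ 2 - 3 * β + 1)‖ - ‖1 - β ^ 2‖ := by
        rw [norm_mul, Complex.norm_natCast]; nlinarith
    _ ≤ ‖(k : ℂ) * (β ^ 2 - 3 * β + 1) - (1 - β ^ 2)‖ := norm_sub_norm_le _ _
    _ = ‖aeval β (pellDenom k)‖ := by rw [aeval_pellDenom]; ring_nf

lemma norm_sub_one_mul_pow_le_two {β : ℂ} (hβ : ‖β‖ ≤ 1) (n : ℕ) : ‖(β - 1) * β ^ n‖ ≤ 2 := by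
  rw [norm_mul, norm_pow]
  have h1 : ‖β - 1‖ ≤ 2 := (norm_sub_le _ _).trans (by rw [norm_one]; linarith)
  have h2 : ‖β‖ ^ n ≤ 1 := pow_le_one₀ (norm_nonneg _) hβ
  nlinarith [norm_nonneg (β - 1), pow_nonneg (norm_nonneg β) n]

theorem gamma1_nonzero_general (k : ℕ) (hk : 2 ≤ k)
    (α : ℝ) (hα1 : 1 < α)
    (hαroot : α ^ k - 2 * α ^ (k - 1) - ∑ i ∈ Finset.range (k - 1), α ^ i = 0)
    (d₁ ℓ m : ℕ) (hd₁ : 1 ≤ d₁) (hℓ : 1 ≤ ℓ) :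
    ∀ n : ℕ, 7 ≤ n →
      (d₁ : ℝ) * 10 ^ (2 * ℓ + m) ≠
        9 * ((α - 1) / (((k : ℝ) + 1) * α ^ 2 - 3 * k * α + k - 1)) * α ^ n := by
  intro n _ hEq
  rw [← aeval_pellDenom] at hEq
  have hD : (100 : ℝ) ≤ d₁ * 10 ^ (2 * ℓ + m) := by
    have : 10 ^ 2 ≤ 10 ^ (2 * ℓ + m) := Nat.pow_le_pow_right (by norm_num) (by omega)
    exact_mod_cast this.trans (Nat.le_mul_of_pos_left _ hd₁)
  have hden : aeval α (pellDenom k) ≠ 0 := by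
    intro h
    rw [h, div_zero, mul_zero, zero_mul] at hEq
    linarith
  set Q : ℤ[X] := 9 * (X - 1) * X ^ n - (d₁ * 10 ^ (2 * ℓ + m) : ℤ[X]) * pellDenom k
  have aeval_Q {A : Type} [CommRing A] (x : A) :
      aeval x Q = 9 * (x - 1) * x ^ n - d₁ * 10 ^ (2 * ℓ + m) * aeval x (pellDenom k) := by
    simp only [Q, map_sub, map_mul, map_pow, aeval_X, map_one, map_natCast, map_ofNat]
  have hQα : aeval α Q = 0 := by
    rw [aeval_Q, hEq]
    field_simp
    ring
  have toℂ : ∀ P : ℤ[X], aeval α P = 0 → aeval (α : ℂ) P = 0 := fun P hP => by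
    simpa [hP] using aeval_algebraMap_apply ℂ α P
  have hΨα : aeval (α : ℂ) (pellCharPoly k) = 0 := toℂ _ (by rwa [aeval_pellCharPoly])
  obtain ⟨β, hβ, hconj⟩ := exists_norm_lt_one_forall_aeval_eq_zero
    (by rwa [Complex.norm_real, Real.norm_of_nonneg (by linarith)])
    (pellCharPoly_monic (by omega)) hΨα (by simp [pellCharPoly_coeff_zero hk])
  have hβeq : 9 * ‖(β - 1) * β ^ n‖ = d₁ * 10 ^ (2 * ℓ + m) * ‖aeval β (pellDenom k)‖ := by
    have h := sub_eq_zero.mp ((aeval_Q β).symm.trans (hconj Q (toℂ Q hQα)))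
    rw [mul_assoc] at h
    simpa only [norm_mul, norm_pow, Complex.norm_natCast, Complex.norm_ofNat] using congrArg norm h
  have hden1 := one_le_norm_aeval_pellDenom hk hβ.le (hconj _ hΨα)
  have hnum2 := norm_sub_one_mul_pow_le_two hβ.le n
  nlinarith

theorem gamma1_nonzero (k : ℕ) (hk : 2 ≤ k)
    (α : ℝ) (hα1 : 1 < α)
    (hαroot : α ^ k - 2 * α ^ (k - 1) - ∑ i ∈ Finset.range (k - 1), α ^ i = 0)
    (hf : 0.276 < (α - 1) / (((k : ℝ) + 1) * α ^ 2 - 3 * k * α + k - 1) ∧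
      (α - 1) / (((k : ℝ) + 1) * α ^ 2 - 3 * k * α + k - 1) < 1)
    (d₁ ℓ m : ℕ) (hd₁ : 1 ≤ d₁) (hd₁9 : d₁ ≤ 9) (hℓ : 1 ≤ ℓ) (hm : 1 ≤ m) :
    ∀ n : ℕ, 7 ≤ n →
      (d₁ : ℝ) * 10 ^ (2 * ℓ + m) ≠
        9 * ((α - 1) / (((k : ℝ) + 1) * α ^ 2 - 3 * k * α + k - 1)) * α ^ n :=
  gamma1_nonzero_general k hk α hα1 hαroot d₁ ℓ m hd₁ hℓ
end
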